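/- Let f : ℝ → ℝ be twice continuously differentiable, even, with f(0) = 0, f''(x) > 0 for all x, f''(s) < f''(t) whenever |t| < |s|, and lim_{|x|→∞} f''(x) = 0. Fix η > 2/f''(0) and let x_η > 0 satisfy η f'(x_η) = 2 x_η. Then for every x > 0 with x ≠ x_η, the one-step gradient descent map satisfies |(x − η f'(x)) + x_η| < |x − x_η|; that is, the distance of the iterate to the 2-periodic orbit {x_η, −x_η} strictly decreases. -/

import Mathlib

/-!
With `g x = η f'(x) - 2x`, the claim `|x - η f'(x) + x_η| < |x - x_η|` is equivalent to
`(2x - η f'(x)) (2x_η - η f'(x)) < 0`, i.e. to `g x` and `f'(x_η) - f'(x)` having the same strict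
sign. The second has the sign of `x_η - x` because `f'' > 0`. As `f''` decreases on `(0, ∞)`, `g` is
strictly concave on `[0, ∞)`; it vanishes at `0` (since `f'` is odd) and at `x_η`, so it is positive
between them and negative beyond `x_η`.
-/

open Set

lemma deriv_zero_of_even {f : ℝ → ℝ} (heven : ∀ x, f x = f (-x)) : deriv f 0 = 0 := by
  have h : deriv (fun x ↦ f (-x)) 0 = -deriv f 0 := by simpa using deriv_comp_neg (f := f) (x := 0)
  rw [show (fun x ↦ f (-x)) = f from funext fun x ↦ (heven x).symm] at h
  linarith

lemma abs_sub_add_lt_abs_sub_iff (x y a : ℝ) :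
    |x - y + a| < |x - a| ↔ (2 * x - y) * (2 * a - y) < 0 := by
  rw [← sq_lt_sq, ← sub_neg]
  ring_nf

namespace StrictConcaveOn

variable {s : Set ℝ} {g : ℝ → ℝ} {a b x : ℝ}

lemma pos_of_mem_Ioo (hg : StrictConcaveOn ℝ s g) (ha : a ∈ s) (hb : b ∈ s)
    (hga : g a = 0) (hgb : g b = 0) (hx : x ∈ Ioo a b) : 0 < g x := by
  have hslope := hg.slope_anti_adjacent ha hb hx.1 hx.2
  rw [hga, hgb, div_lt_div_iff₀ (sub_pos.2 hx.2) (sub_pos.2 hx.1)] at hslope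
  nlinarith [hx.1, hx.2]

lemma neg_of_lt (hg : StrictConcaveOn ℝ s g) (ha : a ∈ s) (hx : x ∈ s)
    (hga : g a = 0) (hgb : g b = 0) (hab : a < b) (hbx : b < x) : g x < 0 := by
  have hslope := hg.slope_anti_adjacent ha hx hab hbx
  rw [hga, hgb, sub_zero, sub_self, zero_div] at hslope
  by_contra! h
  exact hslope.not_ge (div_nonneg h (sub_pos.2 hbx).le)

end StrictConcaveOn

lemma strictConcaveOn_mul_sub_mul {φ : ℝ → ℝ} (hφ : Differentiable ℝ φ)
    (hanti : StrictAntiOn (deriv φ) (Ioi 0)) {η : ℝ} (hη : 0 < η) (c : ℝ) :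
    StrictConcaveOn ℝ (Ici 0) (fun x ↦ η * φ x - c * x) := by
  have hderiv : ∀ y, deriv (fun x ↦ η * φ x - c * x) y = η * deriv φ y - c := fun y ↦ by
    have h : HasDerivAt (fun x ↦ η * φ x - c * x) (η * deriv φ y - c * 1) y :=
      ((hφ y).hasDerivAt.const_mul η).sub ((hasDerivAt_id' y).const_mul c)
    rw [h.deriv, mul_one]
  have hcont : Continuous φ := hφ.continuous
  refine StrictAntiOn.strictConcaveOn_of_deriv (convex_Ici 0) (by fun_prop) ?_
  rw [interior_Ici]
  intro s hs t ht hst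
  simp only [hderiv]
  linarith [mul_lt_mul_of_pos_left (hanti hs ht hst) hη]

theorem gd_step_contracts_to_periodic_orbit_general
    (f : ℝ → ℝ) (hf : ContDiff ℝ 2 f)
    (heven : ∀ x : ℝ, f x = f (-x))
    (hpos : ∀ x : ℝ, 0 < deriv (deriv f) x)
    (hstrict : ∀ s t : ℝ, |t| < |s| → deriv (deriv f) s < deriv (deriv f) t)
    (η : ℝ)
    (xη : ℝ) (hxη : 0 < xη) (heq : η * deriv f xη = 2 * xη) :
    ∀ x : ℝ, 0 < x → x ≠ xη → |(x - η * deriv f x) + xη| < |x - xη| := by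
  intro x hx hne
  have hmono : StrictMono (deriv f) := strictMono_of_deriv_pos hpos
  have hdf_xη : 0 < deriv f xη := deriv_zero_of_even heven ▸ hmono hxη
  have hη : 0 < η := pos_of_mul_pos_left (heq ▸ by positivity) hdf_xη.le
  have hanti : StrictAntiOn (deriv (deriv f)) (Ioi 0) := fun s hs t ht hst ↦
    hstrict t s (by rwa [abs_of_pos hs, abs_of_pos ht])
  have hg := strictConcaveOn_mul_sub_mul hf.differentiable_deriv_two hanti hη 2
  have hg0 : η * deriv f 0 - 2 * 0 = 0 := by simp [deriv_zero_of_even heven]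
  have hgxη : η * deriv f xη - 2 * xη = 0 := sub_eq_zero.2 heq
  rw [abs_sub_add_lt_abs_sub_iff, ← heq]
  rcases hne.lt_or_gt with hlt | hgt
  · have hgx := hg.pos_of_mem_Ioo self_mem_Ici hxη.le hg0 hgxη ⟨hx, hlt⟩
    have := mul_lt_mul_of_pos_left (hmono hlt) hη
    exact mul_neg_of_neg_of_pos (by linarith) (by linarith)
  · have hgx := hg.neg_of_lt self_mem_Ici hx.le hg0 hgxη hxη hgt
    have := mul_lt_mul_of_pos_left (hmono hgt) hη
    exact mul_neg_of_pos_of_neg (by linarith) (by linarith)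

/-- For strictly subquadratic `f`, `η > 2/f''(0)` and the positive
2-periodic point `x_η` (with `η f'(x_η) = 2 x_η`), each gradient descent step
from `x > 0`, `x ≠ x_η` strictly decreases the distance to the orbit
`{x_η, -x_η}`: `|(x - η f'(x)) + x_η| < |x - x_η|`. -/
theorem gd_step_contracts_to_periodic_orbit
    (f : ℝ → ℝ) (hf : ContDiff ℝ 2 f)
    (heven : ∀ x : ℝ, f x = f (-x)) (h0 : f 0 = 0)
    (hpos : ∀ x : ℝ, 0 < deriv (deriv f) x)
    (hstrict : ∀ s t : ℝ, |t| < |s| → deriv (deriv f) s < deriv (deriv f) t)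
    (hlim : Filter.Tendsto (deriv (deriv f)) (Filter.cocompact ℝ) (nhds 0))
    (η : ℝ) (hη : 2 / deriv (deriv f) 0 < η)
    (xη : ℝ) (hxη : 0 < xη) (heq : η * deriv f xη = 2 * xη) :
    ∀ x : ℝ, 0 < x → x ≠ xη → |(x - η * deriv f x) + xη| < |x - xη| :=
  gd_step_contracts_to_periodic_orbit_general f hf heven hpos hstrict η xη hxη heq
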